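/- In the higher derived brackets setting, for an odd element Δ and r ≥ 0, the following are equivalent: (1) all derived brackets of Δ² with more than r arguments vanish; (2) all Jacobi identities Jⁿ_Δ = 0 hold for n > r. -/

import Mathlib

open scoped Classical

/-- The Koszul sign `(-1)^{pq}` for parities `p q : ZMod 2`. -/
def ksign (p q : ZMod 2) : ℤ := if p = 1 ∧ q = 1 then -1 else 1

/-- A Lie superalgebra over `k`: a `ZMod 2`-graded module with a bilinear bracket
that is graded-antisymmetric and satisfies the graded Jacobi identity
(on homogeneous elements). -/
structure LieSuper (k G : Type) [Field k] [AddCommGroup G] [Module k G] where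
  gr : ZMod 2 → Submodule k G
  br : G →ₗ[k] G →ₗ[k] G
  br_gr : ∀ i j x y, x ∈ gr i → y ∈ gr j → br x y ∈ gr (i + j)
  skew : ∀ i j x y, x ∈ gr i → y ∈ gr j → br x y = -(ksign i j • br y x)
  jacobi : ∀ i j x y z, x ∈ gr i → y ∈ gr j →
    br x (br y z) = br (br x y) z + ksign i j • br y (br x z)

variable {k G : Type} [Field k] [AddCommGroup G] [Module k G]

/-- The `n`-th derived bracket `{a₁,…,aₙ}_D := P[⋯[[D,a₁],a₂],⋯,aₙ]`. -/
def dbr (L : LieSuper k G) (P : G →ₗ[k] G) (D : G) (l : List G) : G :=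
  P (l.foldl (fun x a => L.br x a) D)

/-- `σ` is a `(j, n-j)`-shuffle: strictly monotone on the first `j` positions
and on the last `n - j` positions. -/
def IsShuffle {n : ℕ} (j : ℕ) (σ : Equiv.Perm (Fin n)) : Prop :=
  (∀ s t : Fin n, s < t → (t : ℕ) < j → σ s < σ t) ∧
  (∀ s t : Fin n, s < t → j ≤ (s : ℕ) → σ s < σ t)

/-- The Koszul sign of the permutation `σ` of homogeneous arguments of parities `p`:
the product of `(-1)^{p_i p_j}` over all inversions of `σ`. -/
noncomputable def koszulSign {n : ℕ} (p : Fin n → ZMod 2) (σ : Equiv.Perm (Fin n)) : ℤ :=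
  ∏ q ∈ Finset.univ.filter (fun q : Fin n × Fin n => q.1 < q.2 ∧ σ q.2 < σ q.1),
    ksign (p (σ q.1)) (p (σ q.2))

/-- The `n`-th Jacobiator of the derived brackets of `D`:
`Jⁿ(a₁,…,aₙ) = Σ_{j+l=n} Σ_{(j,l)-shuffles σ} ± {{a_{σ(1)},…,a_{σ(j)}}_D, a_{σ(j+1)},…,a_{σ(n)}}_D`
with Koszul signs. -/
noncomputable def jacobiator (L : LieSuper k G) (P : G →ₗ[k] G) (D : G) {n : ℕ}
    (p : Fin n → ZMod 2) (a : Fin n → G) : G :=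
  ∑ j ∈ Finset.range (n + 1),
    ∑ σ ∈ Finset.univ.filter (fun σ : Equiv.Perm (Fin n) => IsShuffle j σ),
      koszulSign p σ •
        dbr L P D
          (dbr L P D (((List.finRange n).take j).map fun i => a (σ i)) ::
            ((List.finRange n).drop j).map fun i => a (σ i))

/-!
For homogeneous `a₁, …, aₙ ∈ im P` both sides of `Jⁿ_Δ(a) = {a₁, …, aₙ}_{Δ²}` are sums over
subsets `S ⊆ {1, …, n}`. Write `Δ_S` for the iterated bracket of `Δ` with the `aᵢ`, `i ∈ S`.
The Jacobi identity expands `[[Δ, Δ], a₁, …, aₙ]` into `∑_S ± [Δ_S, Δ_{Sᶜ}]`; since `im P` is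
abelian and `ker P` is a subalgebra, `P[x, y] = P[Px, (1 - P)y] + P[(1 - P)x, Py]`, and the two
halves agree after `S ↦ Sᶜ`, which absorbs the factor `½`. In the Jacobiator the
`(j, n - j)`-shuffles are exactly the subsets `S`, and `PΔ_S` commutes with every `aᵢ`, so
`[[Δ, PΔ_S], a_{Sᶜ}] = ±[Δ_{Sᶜ}, PΔ_S]`, giving the same sum. Thus `Jⁿ_Δ = {⋯}_{Δ²}` for each `n`.
-/

def paritySign (e : ZMod 2) : ℤ := if e = 1 then -1 else 1

lemma ksign_eq_paritySign (p q : ZMod 2) : ksign p q = paritySign (p * q) := by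
  revert p q; decide

lemma paritySign_add (x y : ZMod 2) : paritySign (x + y) = paritySign x * paritySign y := by
  revert x y; decide

lemma prod_ksign_eq_paritySign_sum {ι : Type*} (s : Finset ι) (f g : ι → ZMod 2) :
    ∏ i ∈ s, ksign (f i) (g i) = paritySign (∑ i ∈ s, f i * g i) := by
  induction s using Finset.cons_induction with
  | empty => rfl
  | cons c s _ ih => rw [Finset.prod_cons, Finset.sum_cons, ih, paritySign_add, ksign_eq_paritySign]

section crossParity

variable {ι : Type*} [LinearOrder ι] (p : ι → ZMod 2)

/-- `(-1) ^ crossParity p S T` is the Koszul sign of moving each `v ∈ T` to the left of the larger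
elements of `S`. -/
def crossParity (S T : Finset ι) : ZMod 2 :=
  ∑ u ∈ S, ∑ v ∈ T with v < u, p u * p v

lemma crossParity_insert_left {S T : Finset ι} {c : ι} (hc : c ∉ S) (hcT : ∀ v ∈ T, c < v) :
    crossParity p (insert c S) T = crossParity p S T := by
  rw [crossParity, Finset.sum_insert hc, Finset.filter_false_of_mem fun v hv => (hcT v hv).asymm,
    Finset.sum_empty, zero_add]
  rfl

lemma crossParity_insert_right {S T : Finset ι} {c : ι} (hc : c ∉ T) (hcS : ∀ u ∈ S, c < u) :
    crossParity p S (insert c T) = crossParity p S T + (∑ u ∈ S, p u) * p c := by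
  rw [crossParity, crossParity, Finset.sum_mul, ← Finset.sum_add_distrib]
  refine Finset.sum_congr rfl fun u hu => ?_
  rw [Finset.filter_insert, if_pos (hcS u hu), Finset.sum_insert (by simp [hc])]
  exact add_comm _ _

lemma crossParity_add_crossParity {S T : Finset ι} (hST : Disjoint S T) :
    crossParity p S T + crossParity p T S = (∑ u ∈ S, p u) * ∑ v ∈ T, p v := by
  have hswap : crossParity p T S = ∑ u ∈ S, ∑ v ∈ T with ¬ v < u, p u * p v := by
    rw [crossParity, Finset.sum_comm' (t' := S) (s' := fun u => T.filter (¬ · < u))]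
    · exact Finset.sum_congr rfl fun u _ => Finset.sum_congr rfl fun v _ => mul_comm _ _
    · intro v u
      simp only [Finset.mem_filter, not_lt]
      constructor
      · rintro ⟨hv, hu, huv⟩
        exact ⟨⟨hv, huv.le⟩, hu⟩
      · rintro ⟨⟨hv, huv⟩, hu⟩
        exact ⟨hv, hu, lt_of_le_of_ne huv fun h => Finset.disjoint_left.mp hST hu (h ▸ hv)⟩
  rw [hswap, crossParity, ← Finset.sum_add_distrib, Finset.sum_mul_sum]
  exact Finset.sum_congr rfl fun u _ => Finset.sum_filter_add_sum_filter_not _ _ _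

end crossParity

lemma Finset.sum_map_sort {ι M : Type*} [LinearOrder ι] [AddCommMonoid M] (f : ι → M)
    (S : Finset ι) : (S.sort.map f).sum = ∑ i ∈ S, f i := by
  rw [← Finset.sum_map_toList]
  exact ((S.sort_perm_toList _).map f).sum_eq

namespace LieSuper

variable (L : LieSuper k G)

def iterBr (x : G) (l : List G) : G := l.foldl (fun u v => L.br u v) x

@[simp] lemma iterBr_nil (x : G) : L.iterBr x [] = x := rfl

@[simp] lemma iterBr_cons (x c : G) (l : List G) :
    L.iterBr x (c :: l) = L.iterBr (L.br x c) l := rfl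

lemma dbr_eq_iterBr (P : G →ₗ[k] G) (D : G) (l : List G) : dbr L P D l = P (L.iterBr D l) := rfl

lemma iterBr_add (x y : G) (l : List G) :
    L.iterBr (x + y) l = L.iterBr x l + L.iterBr y l := by
  induction l generalizing x y with
  | nil => rfl
  | cons c l ih => simp only [iterBr_cons, map_add, LinearMap.add_apply, ih]

lemma iterBr_smul (s : k) (x : G) (l : List G) : L.iterBr (s • x) l = s • L.iterBr x l := by
  induction l generalizing x with
  | nil => rfl
  | cons c l ih => simp only [iterBr_cons, map_smul, LinearMap.smul_apply, ih]

lemma iterBr_zsmul (s : ℤ) (x : G) (l : List G) : L.iterBr (s • x) l = s • L.iterBr x l := by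
  simp only [← Int.cast_smul_eq_zsmul k, iterBr_smul]

variable {L}

lemma iterBr_map_mem_gr {ι : Type*} {p : ι → ZMod 2} {a : ι → G} (ha : ∀ i, a i ∈ L.gr (p i))
    (t : List ι) {x : G} {i : ZMod 2} (hx : x ∈ L.gr i) :
    L.iterBr x (t.map a) ∈ L.gr (i + (t.map p).sum) := by
  induction t generalizing x i with
  | nil => simpa using hx
  | cons c t ih => simpa [add_assoc] using ih (L.br_gr _ _ _ _ hx (ha c))

lemma br_br_right {i j m : ZMod 2} {x y c : G}
    (hx : x ∈ L.gr i) (hy : y ∈ L.gr j) (hc : c ∈ L.gr m) :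
    L.br (L.br x y) c = ksign j m • L.br (L.br x c) y + L.br x (L.br y c) := by
  have hsign₁ : ∀ i j m : ZMod 2, ksign (i + j) m * ksign m i = ksign j m := by decide
  have hsign₂ : ∀ i j m : ZMod 2, ksign (i + j) m * (ksign m i * ksign m j) = 1 := by decide
  rw [L.skew _ _ _ _ (L.br_gr _ _ _ _ hx hy) hc, L.jacobi m i c x y hc hx,
    L.skew m i c x hc hx, L.skew m j c y hc hy]
  simp only [map_neg, map_zsmul, LinearMap.neg_apply, LinearMap.smul_apply, smul_neg, smul_add,
    smul_smul, neg_add, neg_neg, hsign₁, hsign₂, one_smul]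

section
variable {ι : Type*} {p : ι → ZMod 2} {a : ι → G}

variable (L) in
def iterBrOn [LinearOrder ι] (x : G) (a : ι → G) (S : Finset ι) : G := L.iterBr x (S.sort.map a)

lemma iterBrOn_mem_gr [LinearOrder ι] (ha : ∀ i, a i ∈ L.gr (p i)) (S : Finset ι) {x : G}
    {i : ZMod 2} (hx : x ∈ L.gr i) : L.iterBrOn x a S ∈ L.gr (i + ∑ u ∈ S, p u) := by
  have := iterBr_map_mem_gr ha S.sort hx
  rwa [Finset.sum_map_sort] at this

lemma iterBr_br_of_br_eq_zero (ha : ∀ i, a i ∈ L.gr (p i)) {b : G} {m : ZMod 2}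
    (hb : b ∈ L.gr m) (hab : ∀ i, L.br b (a i) = 0) (t : List ι) {x : G} {i : ZMod 2}
    (hx : x ∈ L.gr i) :
    L.iterBr (L.br x b) (t.map a) = ksign m (t.map p).sum • L.br (L.iterBr x (t.map a)) b := by
  induction t generalizing x i with
  | nil =>
    have hsign : ∀ m : ZMod 2, ksign m 0 = 1 := by decide
    simp [hsign]
  | cons c t ih =>
    have hsign : ∀ m x y : ZMod 2, ksign m x * ksign m y = ksign m (x + y) := by decide
    rw [List.map_cons, iterBr_cons, br_br_right hx hb (ha c), hab, map_zero, add_zero,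
      iterBr_zsmul, ih (L.br_gr _ _ _ _ hx (ha c)), smul_smul, hsign]
    simp

lemma iterBr_br_eq_sum_powerset [LinearOrder ι] (ha : ∀ i, a i ∈ L.gr (p i)) {t : List ι}
    (ht : t.Pairwise (· < ·)) {x y : G} {i j : ZMod 2} (hx : x ∈ L.gr i) (hy : y ∈ L.gr j) :
    L.iterBr (L.br x y) (t.map a) =
      ∑ S ∈ t.toFinset.powerset,
        paritySign (j * ∑ u ∈ S, p u + crossParity p S (t.toFinset \ S)) •
          L.br (L.iterBrOn x a S) (L.iterBrOn y a (t.toFinset \ S)) := by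
  unfold iterBrOn
  induction t generalizing x y i j with
  | nil => simp [paritySign, crossParity]
  | cons c t ih =>
    obtain ⟨hlt, ht⟩ := List.pairwise_cons.mp ht
    set T := t.toFinset
    have hcT : c ∉ T := fun h => lt_irrefl c (hlt c (List.mem_toFinset.mp h))
    have hltT : ∀ u ∈ T, c < u := fun u hu => hlt u (List.mem_toFinset.mp hu)
    rw [List.map_cons, iterBr_cons, br_br_right hx hy (ha c), iterBr_add, iterBr_zsmul,
      ih ht (L.br_gr _ _ _ _ hx (ha c)) hy, ih ht hx (L.br_gr _ _ _ _ hy (ha c)),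
      List.toFinset_cons, Finset.sum_powerset_insert hcT, Finset.smul_sum, add_comm]
    congr 1
    · refine Finset.sum_congr rfl fun S hS => ?_
      have hcS : c ∉ S := fun h => hcT (Finset.mem_powerset.mp hS h)
      have hdiff : insert c T \ S = insert c (T \ S) := Finset.insert_sdiff_of_notMem _ hcS
      have hsort : (insert c (T \ S)).sort = c :: (T \ S).sort :=
        Finset.sort_insert _ (fun v hv => (hltT v (Finset.mem_sdiff.mp hv).1).le)
          (fun h => hcT (Finset.mem_sdiff.mp h).1)
      rw [hdiff, hsort, crossParity_insert_right p (fun h => hcT (Finset.mem_sdiff.mp h).1)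
        (fun u hu => hltT u (Finset.mem_powerset.mp hS hu))]
      congr 2
      ring
    · refine Finset.sum_congr rfl fun S hS => ?_
      have hST : S ⊆ T := Finset.mem_powerset.mp hS
      have hcS : c ∉ S := fun h => hcT (hST h)
      have hdiff : insert c T \ insert c S = T \ S := by
        rw [Finset.insert_sdiff_insert, Finset.sdiff_insert,
          Finset.erase_eq_of_notMem (fun h => hcT (Finset.mem_sdiff.mp h).1)]
      rw [hdiff, Finset.sort_insert _ (fun u hu => (hltT u (hST hu)).le) hcS, List.map_cons,
        iterBr_cons, smul_smul, Finset.sum_insert hcS,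
        crossParity_insert_left p hcS (fun v hv => hltT v (Finset.mem_sdiff.mp hv).1),
        ksign_eq_paritySign, ← paritySign_add]
      congr 2
      ring

end

end LieSuper

section Shuffle

variable {n : ℕ}

def shuffleBlock (j : ℕ) (σ : Equiv.Perm (Fin n)) : Finset (Fin n) :=
  Finset.univ.filter fun u => (σ.symm u : ℕ) < j

lemma mem_shuffleBlock {j : ℕ} {σ : Equiv.Perm (Fin n)} {u : Fin n} :
    u ∈ shuffleBlock j σ ↔ (σ.symm u : ℕ) < j := by
  simp [shuffleBlock]

lemma List.mem_take_finRange {j : ℕ} {q : Fin n} : q ∈ (List.finRange n).take j ↔ (q : ℕ) < j := by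
  simp [List.mem_take_iff_getElem, Fin.ext_iff]

lemma List.mem_drop_finRange {j : ℕ} {q : Fin n} : q ∈ (List.finRange n).drop j ↔ j ≤ (q : ℕ) := by
  simp only [List.mem_drop_iff_getElem, List.length_finRange, List.getElem_finRange, Fin.ext_iff,
    Fin.val_cast]
  exact ⟨fun ⟨i, _, hi⟩ => hi ▸ Nat.le_add_right j i, fun h => ⟨q - j, by omega, by omega⟩⟩

lemma IsShuffle.map_take {j : ℕ} {σ : Equiv.Perm (Fin n)} (hσ : IsShuffle j σ) :
    ((List.finRange n).take j).map σ = (shuffleBlock j σ).sort := by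
  refine List.SortedLT.eq_of_mem_iff ?_ (Finset.sortedLT_sort _) fun u => ?_
  · refine List.sortedLT_iff_pairwise.mpr (List.pairwise_map.mpr ?_)
    exact ((List.sortedLT_finRange n).pairwise.sublist (List.take_sublist _ _)).imp_of_mem
      fun _ ht hst => hσ.1 _ _ hst (List.mem_take_finRange.mp ht)
  · simp only [List.mem_map, List.mem_take_finRange, Finset.mem_sort, mem_shuffleBlock]
    exact ⟨by rintro ⟨q, hq, rfl⟩; simpa using hq, fun h => ⟨σ.symm u, h, σ.apply_symm_apply u⟩⟩

lemma IsShuffle.map_drop {j : ℕ} {σ : Equiv.Perm (Fin n)} (hσ : IsShuffle j σ) :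
    ((List.finRange n).drop j).map σ = (shuffleBlock j σ)ᶜ.sort := by
  refine List.SortedLT.eq_of_mem_iff ?_ (Finset.sortedLT_sort _) fun u => ?_
  · refine List.sortedLT_iff_pairwise.mpr (List.pairwise_map.mpr ?_)
    exact ((List.sortedLT_finRange n).pairwise.sublist (List.drop_sublist _ _)).imp_of_mem
      fun hs _ hst => hσ.2 _ _ hst (List.mem_drop_finRange.mp hs)
  · simp only [List.mem_map, List.mem_drop_finRange, Finset.mem_sort, Finset.mem_compl,
      mem_shuffleBlock, not_lt]
    exact ⟨by rintro ⟨q, hq, rfl⟩; simpa using hq, fun h => ⟨σ.symm u, h, σ.apply_symm_apply u⟩⟩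

lemma IsShuffle.eq_of_shuffleBlock_eq {j : ℕ} {σ τ : Equiv.Perm (Fin n)} (hσ : IsShuffle j σ)
    (hτ : IsShuffle j τ) (h : shuffleBlock j σ = shuffleBlock j τ) : σ = τ := by
  ext q : 1
  rcases lt_or_ge (q : ℕ) j with hq | hq
  · have := hσ.map_take.trans (h ▸ hτ.map_take.symm)
    exact List.map_inj_left.mp this q (List.mem_take_finRange.mpr hq)
  · have := hσ.map_drop.trans (h ▸ hτ.map_drop.symm)
    exact List.map_inj_left.mp this q (List.mem_drop_finRange.mpr hq)

lemma card_shuffleBlock {j : ℕ} (σ : Equiv.Perm (Fin n)) (hj : j ≤ n) :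
    (shuffleBlock j σ).card = j := by
  have : shuffleBlock j σ =
      (Finset.univ.filter fun q : Fin n => (q : ℕ) < j).map σ.toEmbedding := by
    ext u
    simp [mem_shuffleBlock]
  rw [this, Finset.card_map, Fin.card_filter_val_lt, min_eq_right hj]

lemma exists_isShuffle (S : Finset (Fin n)) :
    ∃ σ : Equiv.Perm (Fin n), IsShuffle S.card σ ∧ shuffleBlock S.card σ = S := by
  set l := S.sort ++ Sᶜ.sort
  have hnd : l.Nodup := (Finset.sort_nodup _ _).append (Finset.sort_nodup _ _)
    fun u hu hu' => Finset.mem_compl.mp ((Finset.mem_sort _).mp hu') ((Finset.mem_sort _).mp hu)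
  have hlen : l.length = n := by
    have := S.card_le_univ
    simp only [l, List.length_append, Finset.length_sort, Finset.card_compl,
      Fintype.card_fin] at this ⊢
    omega
  let σ : Equiv.Perm (Fin n) := (finCongr hlen.symm).trans
    (List.Nodup.getEquivOfForallMemList l hnd fun u => by by_cases hu : u ∈ S <;> simp [l, hu])
  have hσ (q : Fin n) : σ q = l[(q : ℕ)]'(hlen.symm ▸ q.isLt) := rfl
  have hS := List.sortedLT_iff_getElem_lt_getElem_of_lt.mp (Finset.sortedLT_sort S)
  have hSc := List.sortedLT_iff_getElem_lt_getElem_of_lt.mp (Finset.sortedLT_sort Sᶜ)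
  have hmem (q : Fin n) : σ q ∈ S ↔ (q : ℕ) < S.card := by
    rw [hσ, List.getElem_append]
    split_ifs with hq
    · exact iff_of_true ((Finset.mem_sort _).mp (List.getElem_mem _)) (by simpa using hq)
    · exact iff_of_false (Finset.mem_compl.mp ((Finset.mem_sort _).mp (List.getElem_mem _)))
        (by simpa using hq)
  refine ⟨σ, ⟨fun s t hst ht => ?_, fun s t hst hs => ?_⟩, ?_⟩
  · rw [hσ, hσ, List.getElem_append_left, List.getElem_append_left]
    · exact hS hst
    all_goals simp only [Finset.length_sort]; omega
  · rw [hσ, hσ, List.getElem_append_right, List.getElem_append_right]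
    · exact hSc (by simp only [Finset.length_sort]; omega)
    all_goals simp only [Finset.length_sort]; omega
  · ext u
    rw [mem_shuffleBlock, ← hmem, σ.apply_symm_apply]

lemma sum_isShuffle_eq_sum_finset {M : Type*} [AddCommMonoid M] (g : Finset (Fin n) → M) :
    ∑ j ∈ Finset.range (n + 1),
      ∑ σ ∈ Finset.univ.filter (fun σ : Equiv.Perm (Fin n) => IsShuffle j σ),
        g (shuffleBlock j σ) = ∑ S : Finset (Fin n), g S := by
  rw [← Finset.sum_fiberwise_of_maps_to (g := Finset.card) (t := Finset.range (n + 1))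
    fun S _ => Finset.mem_range.mpr (Nat.lt_succ_of_le (card_finset_fin_le S))]
  refine Finset.sum_congr rfl fun j hj => ?_
  refine Finset.sum_bij (fun σ _ => shuffleBlock j σ) (fun σ hσ => ?_) (fun σ hσ τ hτ h => ?_)
    (fun S hS => ?_) fun _ _ => rfl
  · simp [card_shuffleBlock σ (Nat.lt_succ_iff.mp (Finset.mem_range.mp hj))]
  · exact (Finset.mem_filter.mp hσ).2.eq_of_shuffleBlock_eq (Finset.mem_filter.mp hτ).2 h
  · obtain ⟨σ, hσ, hσS⟩ := exists_isShuffle S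
    rw [(Finset.mem_filter.mp hS).2] at hσ hσS
    exact ⟨σ, by simpa using hσ, hσS⟩

lemma IsShuffle.lt_and_lt_iff {j : ℕ} {σ : Equiv.Perm (Fin n)} (hσ : IsShuffle j σ)
    (s t : Fin n) :
    s < t ∧ σ t < σ s ↔ σ s ∈ shuffleBlock j σ ∧ σ t ∉ shuffleBlock j σ ∧ σ t < σ s := by
  simp only [mem_shuffleBlock, Equiv.symm_apply_apply, not_lt]
  constructor
  · rintro ⟨hst, hinv⟩
    refine ⟨?_, ?_, hinv⟩
    · by_contra hs
      exact (hσ.2 s t hst (not_lt.mp hs)).asymm hinv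
    · by_contra ht
      exact (hσ.1 s t hst (not_le.mp ht)).asymm hinv
  · rintro ⟨hs, ht, hinv⟩
    exact ⟨Fin.lt_def.mpr (hs.trans_le ht), hinv⟩

lemma koszulSign_of_isShuffle {j : ℕ} {σ : Equiv.Perm (Fin n)} (hσ : IsShuffle j σ)
    (p : Fin n → ZMod 2) :
    koszulSign p σ = paritySign (crossParity p (shuffleBlock j σ) (shuffleBlock j σ)ᶜ) := by
  set S := shuffleBlock j σ
  have hinv : koszulSign p σ =
      ∏ w ∈ Finset.univ.filter (fun w : Fin n × Fin n => w.1 ∈ S ∧ w.2 ∉ S ∧ w.2 < w.1),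
        ksign (p w.1) (p w.2) :=
    Finset.prod_equiv (σ.prodCongr σ) (fun q => by simpa using hσ.lt_and_lt_iff q.1 q.2)
      fun _ _ => rfl
  rw [hinv, prod_ksign_eq_paritySign_sum, crossParity,
    Finset.sum_finset_product _ S (fun u => Sᶜ.filter (· < u)) (by simp)]

end Shuffle

lemma jacobiator_eq_sum_finset (L : LieSuper k G) (P : G →ₗ[k] G) (D : G) {n : ℕ}
    (p : Fin n → ZMod 2) (a : Fin n → G) :
    jacobiator L P D p a = ∑ S : Finset (Fin n), paritySign (crossParity p S Sᶜ) •
      dbr L P D (dbr L P D (S.sort.map a) :: Sᶜ.sort.map a) := by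
  rw [jacobiator, ← sum_isShuffle_eq_sum_finset]
  refine Finset.sum_congr rfl fun j _ => Finset.sum_congr rfl fun σ hσ => ?_
  replace hσ := (Finset.mem_filter.mp hσ).2
  rw [koszulSign_of_isShuffle hσ, ← hσ.map_take, ← hσ.map_drop, List.map_map, List.map_map]
  rfl

namespace LieSuper

variable {L : LieSuper k G}

lemma apply_br_eq_add_of_proj {P : G →ₗ[k] G} (hP : ∀ x, P (P x) = P x)
    (hker : ∀ x y, P x = 0 → P y = 0 → P (L.br x y) = 0)
    (habel : ∀ x y, L.br (P x) (P y) = 0) (x y : G) :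
    P (L.br x y) = P (L.br (P x) (y - P y)) + P (L.br (x - P x) (P y)) := by
  have hPsub : ∀ z, P (z - P z) = 0 := fun z => by rw [map_sub, hP, sub_self]
  have hsplit : L.br x y = L.br (P x) (P y) + L.br (P x) (y - P y) + L.br (x - P x) (P y)
      + L.br (x - P x) (y - P y) := by
    simp only [map_sub, LinearMap.sub_apply]
    abel
  rw [hsplit, map_add, map_add, map_add, habel, hker _ _ (hPsub x) (hPsub y), map_zero, zero_add,
    add_zero]

variable {P : G →ₗ[k] G} {D : G} {n : ℕ} {p : Fin n → ZMod 2} {a : Fin n → G}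

lemma jacobiator_eq_sum_br_proj (hPgr : ∀ (i : ZMod 2) (x : G), x ∈ L.gr i → P x ∈ L.gr i)
    (habel : ∀ x y, L.br (P x) (P y) = 0) (hD : D ∈ L.gr 1)
    (ha : ∀ i, a i ∈ L.gr (p i) ∧ P (a i) = a i) :
    jacobiator L P D p a = ∑ S : Finset (Fin n),
      paritySign (∑ i ∈ Sᶜ, p i + crossParity p Sᶜ S) •
        P (L.br (L.iterBrOn D a Sᶜ - P (L.iterBrOn D a Sᶜ)) (P (L.iterBrOn D a S))) := by
  have hsign : ∀ t₁ t₂ x₁ x₂ : ZMod 2, x₁ + x₂ = t₁ * t₂ →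
      paritySign x₁ * ksign (1 + t₁) t₂ = paritySign (t₂ + x₂) := by decide
  rw [jacobiator_eq_sum_finset]
  refine Finset.sum_congr rfl fun S _ => ?_
  have hB := iterBrOn_mem_gr (fun i => (ha i).1) S hD
  have hcomm (i : Fin n) : L.br (P (L.iterBrOn D a S)) (a i) = 0 := by
    rw [← (ha i).2]
    exact habel _ _
  change _ • P (L.iterBr (L.br D (P (L.iterBrOn D a S))) (Sᶜ.sort.map a)) = _
  rw [iterBr_br_of_br_eq_zero (fun i => (ha i).1) (hPgr _ _ hB) hcomm _ hD, Finset.sum_map_sort,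
    map_zsmul, smul_smul, hsign _ _ _ _ (crossParity_add_crossParity p disjoint_compl_right),
    map_sub, LinearMap.sub_apply, habel, sub_zero]
  rfl

lemma dbr_half_br_self_eq_sum_br_proj [NeZero (2 : k)] (hP : ∀ x, P (P x) = P x)
    (hPgr : ∀ (i : ZMod 2) (x : G), x ∈ L.gr i → P x ∈ L.gr i)
    (hker : ∀ x y, P x = 0 → P y = 0 → P (L.br x y) = 0)
    (habel : ∀ x y, L.br (P x) (P y) = 0) (hD : D ∈ L.gr 1) (ha : ∀ i, a i ∈ L.gr (p i)) :
    dbr L P ((1 / 2 : k) • L.br D D) (List.ofFn a) = ∑ S : Finset (Fin n),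
      paritySign (∑ i ∈ Sᶜ, p i + crossParity p Sᶜ S) •
        P (L.br (L.iterBrOn D a Sᶜ - P (L.iterBrOn D a Sᶜ)) (P (L.iterBrOn D a S))) := by
  set F : Finset (Fin n) → G := fun S => paritySign (∑ i ∈ Sᶜ, p i + crossParity p Sᶜ S) •
    P (L.br (L.iterBrOn D a Sᶜ - P (L.iterBrOn D a Sᶜ)) (P (L.iterBrOn D a S)))
  have hsign : ∀ t₁ t₂ x₁ x₂ : ZMod 2, x₁ + x₂ = t₁ * t₂ →
      -(paritySign (t₁ + x₁) * ksign (1 + t₁) (1 + t₂)) = paritySign (t₂ + x₂) := by decide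
  have hterm (S : Finset (Fin n)) :
      paritySign (∑ i ∈ S, p i + crossParity p S Sᶜ) •
        P (L.br (L.iterBrOn D a S) (L.iterBrOn D a Sᶜ)) = F S + F Sᶜ := by
    have hB := iterBrOn_mem_gr ha S hD
    have hBc := iterBrOn_mem_gr ha Sᶜ hD
    rw [apply_br_eq_add_of_proj hP hker habel, L.skew _ _ _ _ (hPgr _ _ hB)
      (Submodule.sub_mem _ hBc (hPgr _ _ hBc)), map_neg, map_zsmul, smul_add, smul_neg, smul_smul,
      ← neg_smul, hsign _ _ _ _ (crossParity_add_crossParity p disjoint_compl_right)]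
    simp only [F, compl_compl]
  have hexpand : dbr L P (L.br D D) (List.ofFn a) = ∑ S, (F S + F Sᶜ) := by
    rw [dbr_eq_iterBr, List.ofFn_eq_map,
      iterBr_br_eq_sum_powerset ha (List.pairwise_lt_finRange n) hD hD, List.toFinset_finRange,
      Finset.powerset_univ, map_sum]
    refine Finset.sum_congr rfl fun S _ => ?_
    rw [← Finset.compl_eq_univ_sdiff, one_mul, map_zsmul, hterm]
  have hcompl : ∑ S, F Sᶜ = ∑ S, F S :=
    Fintype.sum_equiv (compl_involutive.toPerm _) _ _ fun _ => rfl
  rw [dbr_eq_iterBr, iterBr_smul, map_smul, ← dbr_eq_iterBr, hexpand, Finset.sum_add_distrib,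
    hcompl, ← two_smul k, smul_smul, one_div, inv_mul_cancel₀ two_ne_zero, one_smul]

theorem jacobiator_eq_dbr_half_br_self [NeZero (2 : k)] (hP : ∀ x, P (P x) = P x)
    (hPgr : ∀ (i : ZMod 2) (x : G), x ∈ L.gr i → P x ∈ L.gr i)
    (hker : ∀ x y, P x = 0 → P y = 0 → P (L.br x y) = 0)
    (habel : ∀ x y, L.br (P x) (P y) = 0) (hD : D ∈ L.gr 1)
    (ha : ∀ i, a i ∈ L.gr (p i) ∧ P (a i) = a i) :
    jacobiator L P D p a = dbr L P ((1 / 2 : k) • L.br D D) (List.ofFn a) := by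
  rw [jacobiator_eq_sum_br_proj hPgr habel hD ha,
    dbr_half_br_self_eq_sum_br_proj hP hPgr hker habel hD fun i => (ha i).1]

end LieSuper

/-- In the higher derived brackets setting, for odd `Δ` and `r ≥ 0`:
all derived brackets of `Δ² = ½[Δ,Δ]` with more than `r` arguments vanish iff all
Jacobi identities `Jⁿ_Δ = 0` hold for `n > r`. -/
theorem stmt12 [CharZero k] (L : LieSuper k G) (P : G →ₗ[k] G)
    (hP : ∀ x, P (P x) = P x)
    (hPgr : ∀ (i : ZMod 2) (x : G), x ∈ L.gr i → P x ∈ L.gr i)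
    (hker : ∀ x y, P x = 0 → P y = 0 → P (L.br x y) = 0)
    (habel : ∀ x y, L.br (P x) (P y) = 0)
    (D : G) (hD : D ∈ L.gr 1) (r : ℕ) :
    (∀ (n : ℕ), r < n → ∀ (p : Fin n → ZMod 2) (a : Fin n → G),
        (∀ i, a i ∈ L.gr (p i) ∧ P (a i) = a i) →
        dbr L P ((1 / 2 : k) • L.br D D) (List.ofFn a) = 0) ↔
      (∀ (n : ℕ), r < n → ∀ (p : Fin n → ZMod 2) (a : Fin n → G),
        (∀ i, a i ∈ L.gr (p i) ∧ P (a i) = a i) →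
        jacobiator L P D p a = 0) := by
  refine forall₂_congr fun n _ => forall₂_congr fun p a => forall_congr' fun ha => ?_
  rw [L.jacobiator_eq_dbr_half_br_self hP hPgr hker habel hD ha]
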